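/- arXiv:2003.11733 — 2 statements merged into one kernel-verified Lean document; each statement's English description precedes it below -/
import Mathlib

section
/- Let T be a triangle in the plane, E one of its edges, and p a polynomial (of any degree) on T. If p equals a constant a on E, the normal derivative of p vanishes on E, and p is harmonic on T, then p is identically equal to a on T. -/
open scoped RealInnerProductSpace

/-!
Write `p` as a polynomial `q` and let `r = q - a`. As `T` has nonempty interior, harmonicity
on `T` gives `Δq = 0` identically; with `u = B - A` and `n ⟂ u` this reads
`∂ᵤ²r + ‖u‖² ∂ₙ²r = 0`, so `‖u‖² ∂ₙᵏ⁺²r = -∂ᵤ²∂ₙᵏr`. The Cauchy data `r`, `∂ₙr` vanish on the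
edge, hence, being polynomial, on the whole line `A + ℝu`, and the recursion makes every `∂ₙᵏr`
vanish there. Thus all Taylor coefficients in `t` of `r(A + su + tn)` vanish: `r = 0`.
-/

namespace Polynomial

theorem eq_zero_of_forall_iterate_derivative_eval_zero {K : Type*} [Field K] [CharZero K]
    {p : K[X]} (h : ∀ k, (derivative^[k] p).eval 0 = 0) : p = 0 := by
  ext k
  have hk := h k
  rw [← coeff_zero_eq_eval_zero, coeff_iterate_derivative, zero_add, Nat.descFactorial_self,
    nsmul_eq_mul] at hk
  simpa [Nat.factorial_ne_zero] using hk

end Polynomial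

namespace MvPolynomial

section CommRing

variable {R σ : Type*} [CommRing R]

noncomputable def dirDeriv (v : σ → R) : Derivation R (MvPolynomial σ R) (MvPolynomial σ R) :=
  mkDerivation R fun i => C (v i)

@[simp]
theorem dirDeriv_X (v : σ → R) (i : σ) : dirDeriv v (X i) = C (v i) :=
  mkDerivation_X _ _ _

@[simp]
theorem dirDeriv_C (v : σ → R) (r : R) : dirDeriv v (C r) = 0 :=
  (dirDeriv v).map_algebraMap r

theorem dirDeriv_add (v w : σ → R) : dirDeriv (v + w) = dirDeriv v + dirDeriv w :=
  derivation_ext fun i => by simp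

theorem dirDeriv_smul (c : R) (v : σ → R) : dirDeriv (c • v) = c • dirDeriv v :=
  derivation_ext fun i => by simp [smul_eq_C_mul]

theorem dirDeriv_fin_two (v : Fin 2 → R) :
    dirDeriv v = v 0 • dirDeriv (Pi.single 0 1) + v 1 • dirDeriv (Pi.single 1 1) := by
  rw [← dirDeriv_smul, ← dirDeriv_smul, ← dirDeriv_add]
  congr 1
  ext i; fin_cases i <;> simp

theorem dirDeriv_comm (v w : σ → R) (q : MvPolynomial σ R) :
    dirDeriv v (dirDeriv w q) = dirDeriv w (dirDeriv v q) := by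
  have h : ⁅dirDeriv v, dirDeriv w⁆ = 0 := derivation_ext fun i => by
    simp [Derivation.commutator_apply]
  simpa [Derivation.commutator_apply, sub_eq_zero] using congrArg (· q) h

noncomputable def restrictToLine (x v : σ → R) : MvPolynomial σ R →ₐ[R] Polynomial R :=
  aeval fun i => Polynomial.C (x i) + Polynomial.C (v i) * Polynomial.X

@[simp]
theorem restrictToLine_X (x v : σ → R) (i : σ) :
    restrictToLine x v (X i) = Polynomial.C (x i) + Polynomial.C (v i) * Polynomial.X :=
  aeval_X _ i

@[simp]
theorem restrictToLine_C (x v : σ → R) (r : R) : restrictToLine x v (C r) = Polynomial.C r :=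
  aeval_C _ r

theorem eval_restrictToLine (x v : σ → R) (q : MvPolynomial σ R) (t : R) :
    (restrictToLine x v q).eval t = eval (x + t • v) q := by
  induction q using MvPolynomial.induction_on with
  | C r => simp
  | add f g hf hg => simp [hf, hg]
  | mul_X f i hf =>
    simp only [map_mul, Polynomial.eval_mul, hf, restrictToLine_X, Polynomial.eval_add,
      Polynomial.eval_C, Polynomial.eval_X, eval_X, Pi.add_apply, Pi.smul_apply, smul_eq_mul]
    ring

theorem derivative_restrictToLine (x v : σ → R) (q : MvPolynomial σ R) :
    Polynomial.derivative (restrictToLine x v q) = restrictToLine x v (dirDeriv v q) := by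
  induction q using MvPolynomial.induction_on with
  | C r => simp
  | add f g hf hg => simp [hf, hg]
  | mul_X f i hf =>
    simp only [map_mul, Polynomial.derivative_mul, hf, Derivation.leibniz, map_add, smul_eq_mul,
      restrictToLine_X, dirDeriv_X, restrictToLine_C,
      Polynomial.derivative_C, Polynomial.derivative_X]
    ring

theorem iterate_derivative_restrictToLine (x v : σ → R) (k : ℕ) (q : MvPolynomial σ R) :
    Polynomial.derivative^[k] (restrictToLine x v q) = restrictToLine x v ((dirDeriv v)^[k] q) := by
  induction k generalizing q with
  | zero => rfl
  | succ k ih => rw [Function.iterate_succ_apply, Function.iterate_succ_apply,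
      derivative_restrictToLine, ih]

end CommRing

section Field

variable {K σ : Type*} [Field K] {c : K} {v w : σ → K} {r : MvPolynomial σ K}

theorem restrictToLine_eq_zero_of_infinite {S : Set K} (hS : S.Infinite)
    {x v : σ → K} {f : MvPolynomial σ K} (h : ∀ s ∈ S, eval (x + s • v) f = 0) :
    restrictToLine x v f = 0 :=
  Polynomial.eq_zero_of_infinite_isRoot _ (hS.mono fun s hs => by
    simpa [eval_restrictToLine] using h s hs)

theorem anisotropic_laplace_dirDeriv
    (hr : dirDeriv v (dirDeriv v r) + c • dirDeriv w (dirDeriv w r) = 0) :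
    dirDeriv v (dirDeriv v (dirDeriv w r)) + c • dirDeriv w (dirDeriv w (dirDeriv w r)) = 0 := by
  simpa only [map_add, Derivation.map_smul, map_zero, dirDeriv_comm w v] using
    congrArg (dirDeriv w) hr

theorem restrictToLine_dirDeriv_dirDeriv_eq_zero (x : σ → K) (hc : c ≠ 0)
    (hr : dirDeriv v (dirDeriv v r) + c • dirDeriv w (dirDeriv w r) = 0)
    (h₀ : restrictToLine x v r = 0) : restrictToLine x v (dirDeriv w (dirDeriv w r)) = 0 := by
  have h : c • restrictToLine x v (dirDeriv w (dirDeriv w r)) =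
      -Polynomial.derivative (Polynomial.derivative (restrictToLine x v r)) := by
    rw [← map_smul, eq_neg_of_add_eq_zero_right hr, map_neg, derivative_restrictToLine,
      derivative_restrictToLine]
  simpa [h₀, hc] using h

theorem restrictToLine_iterate_dirDeriv_eq_zero (x : σ → K) (hc : c ≠ 0)
    (hr : dirDeriv v (dirDeriv v r) + c • dirDeriv w (dirDeriv w r) = 0)
    (h₀ : restrictToLine x v r = 0) (h₁ : restrictToLine x v (dirDeriv w r) = 0) (k : ℕ) :
    restrictToLine x v ((dirDeriv w)^[k] r) = 0 := by
  induction k generalizing r with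
  | zero => exact h₀
  | succ k ih =>
    exact ih (anisotropic_laplace_dirDeriv hr) h₁
      (restrictToLine_dirDeriv_dirDeriv_eq_zero x hc hr h₀)

theorem eval_eq_zero_of_cauchy_data [CharZero K] (x : σ → K) (hc : c ≠ 0)
    (hr : dirDeriv v (dirDeriv v r) + c • dirDeriv w (dirDeriv w r) = 0)
    (h₀ : restrictToLine x v r = 0) (h₁ : restrictToLine x v (dirDeriv w r) = 0) (s t : K) :
    eval (x + s • v + t • w) r = 0 := by
  have hnormal : restrictToLine (x + s • v) w r = 0 := by
    refine Polynomial.eq_zero_of_forall_iterate_derivative_eval_zero fun k => ?_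
    rw [iterate_derivative_restrictToLine, eval_restrictToLine, zero_smul, add_zero,
      ← eval_restrictToLine, restrictToLine_iterate_dirDeriv_eq_zero x hc hr h₀ h₁,
      Polynomial.eval_zero]
  rw [← eval_restrictToLine, hnormal, Polynomial.eval_zero]

end Field

section Laplacian

variable {R σ : Type*} [CommRing R] [Fintype σ] [DecidableEq σ]

noncomputable def laplacian (q : MvPolynomial σ R) : MvPolynomial σ R :=
  ∑ i, dirDeriv (Pi.single i 1) (dirDeriv (Pi.single i 1) q)

@[simp]
theorem laplacian_C (r : R) : laplacian (C r : MvPolynomial σ R) = 0 := by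
  simp [laplacian]

theorem laplacian_sub (f g : MvPolynomial σ R) :
    laplacian (f - g) = laplacian f - laplacian g := by
  simp [laplacian, Finset.sum_sub_distrib]

theorem laplacian_fin_two_eq (u n : Fin 2 → R) (hn : n 0 ^ 2 + n 1 ^ 2 = 1)
    (hun : n 0 * u 0 + n 1 * u 1 = 0) (q : MvPolynomial (Fin 2) R) :
    (u 0 ^ 2 + u 1 ^ 2) • laplacian q =
      dirDeriv u (dirDeriv u q) + (u 0 ^ 2 + u 1 ^ 2) • dirDeriv n (dirDeriv n q) := by
  rw [dirDeriv_fin_two u, dirDeriv_fin_two n]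
  simp only [laplacian, Fin.sum_univ_two, Derivation.add_apply, Derivation.smul_apply, map_add,
    Derivation.map_smul]
  -- `u ⟂ n` and `‖n‖ = 1` in the plane give `u uᵀ + ‖u‖² n nᵀ = ‖u‖² I`, entry by entry:
  match_scalars
  · linear_combination (n 1 * u 1 - n 0 * u 0) * hun - u 1 ^ 2 * hn
  · linear_combination (n 0 * u 0 - n 1 * u 1) * hun - u 0 ^ 2 * hn
  · linear_combination -(u 1 * n 0 + u 0 * n 1) * hun + u 0 * u 1 * hn
  · linear_combination -(u 1 * n 0 + u 0 * n 1) * hun + u 0 * u 1 * hn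

end Laplacian

section Euclidean

variable {ι : Type*} [Fintype ι]

theorem analyticOnNhd_eval (q : MvPolynomial ι ℝ) :
    AnalyticOnNhd ℝ (fun y : EuclideanSpace ℝ ι => eval (fun i => y i) q) Set.univ :=
  AnalyticOnNhd.eval_continuousLinearMap (EuclideanSpace.equiv ι ℝ).toContinuousLinearMap q

theorem fderiv_eval_apply (q : MvPolynomial ι ℝ) (x v : EuclideanSpace ℝ ι) :
    fderiv ℝ (fun y : EuclideanSpace ℝ ι => eval (fun i => y i) q) x v =
      eval (fun i => x i) (dirDeriv (fun i => v i) q) := by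
  have hline := (restrictToLine (fun i => x i) (fun i => v i) q).hasDerivAt 0
  simp only [derivative_restrictToLine, eval_restrictToLine, zero_smul, add_zero] at hline
  have hcurve : HasDerivAt (fun t : ℝ => x + t • v) v 0 := by
    simpa using ((hasDerivAt_id (0 : ℝ)).smul_const v).const_add x
  have hf : HasFDerivAt (fun y : EuclideanSpace ℝ ι => eval (fun i => y i) q)
      (fderiv ℝ (fun y : EuclideanSpace ℝ ι => eval (fun i => y i) q) x)
      (x + (0 : ℝ) • v) := by
    simpa using (analyticOnNhd_eval q x (Set.mem_univ x)).differentiableAt.hasFDerivAt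
  refine (hf.comp_hasDerivAt 0 hcurve).unique
    (hline.congr_of_eventuallyEq (Filter.Eventually.of_forall fun _ => rfl))

theorem eq_zero_of_eval_eq_zero_on {q : MvPolynomial ι ℝ} {s : Set (EuclideanSpace ℝ ι)}
    (hs : (interior s).Nonempty) (h : ∀ x ∈ s, eval (fun i => x i) q = 0) : q = 0 := by
  obtain ⟨x₀, hx₀⟩ := hs
  have hzero := (analyticOnNhd_eval q).eqOn_zero_of_preconnected_of_eventuallyEq_zero
    isPreconnected_univ (Set.mem_univ x₀)
    (Filter.eventually_of_mem (mem_interior_iff_mem_nhds.mp hx₀) h)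
  exact MvPolynomial.funext fun y => by
    simpa using hzero (Set.mem_univ ((EuclideanSpace.equiv ι ℝ).symm y))

theorem norm_sq_smul_laplacian_eq (u n : EuclideanSpace ℝ (Fin 2)) (hn : ‖n‖ = 1)
    (hnu : ⟪n, u⟫ = 0) (q : MvPolynomial (Fin 2) ℝ) :
    ‖u‖ ^ 2 • laplacian q = dirDeriv (fun i => u i) (dirDeriv (fun i => u i) q) +
      ‖u‖ ^ 2 • dirDeriv (fun i => n i) (dirDeriv (fun i => n i) q) := by
  have hsq (v : EuclideanSpace ℝ (Fin 2)) : ‖v‖ ^ 2 = v 0 ^ 2 + v 1 ^ 2 := by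
    simp [EuclideanSpace.norm_sq_eq, Fin.sum_univ_two]
  rw [hsq u]
  refine laplacian_fin_two_eq _ _ ?_ ?_ q
  · rw [← hsq, hn, one_pow]
  · simpa [PiLp.inner_apply, Fin.sum_univ_two, mul_comm] using hnu

theorem laplacian_eq_zero_of_sum_fderiv_fderiv_eq_zero [DecidableEq ι]
    {q : MvPolynomial ι ℝ} {s : Set (EuclideanSpace ℝ ι)} (hs : (interior s).Nonempty)
    (h : ∀ x ∈ s, ∑ i, fderiv ℝ (fun y => fderiv ℝ (fun z : EuclideanSpace ℝ ι =>
      eval (fun j => z j) q) y (EuclideanSpace.single i 1)) x (EuclideanSpace.single i 1) = 0) :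
    laplacian q = 0 :=
  eq_zero_of_eval_eq_zero_on hs fun x hx => by
    have hsum := h x hx
    simp only [fderiv_eval_apply] at hsum
    rw [laplacian, map_sum]
    exact hsum

end Euclidean

theorem restrictToLine_eq_zero_of_segment {ι : Type*} {A B : EuclideanSpace ℝ ι}
    {f : MvPolynomial ι ℝ} (h : ∀ x ∈ segment ℝ A B, eval (fun i => x i) f = 0) :
    restrictToLine (fun i => A i) (fun i => (B - A) i) f = 0 :=
  restrictToLine_eq_zero_of_infinite (Set.Icc_infinite zero_lt_one) fun s hs => by
    have hmem : A + s • (B - A) ∈ segment ℝ A B := by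
      rw [segment_eq_image']
      exact ⟨s, hs, rfl⟩
    simpa [Pi.add_def, Pi.smul_def] using h _ hmem

end MvPolynomial

theorem exists_smul_add_smul_eq_of_inner_eq_zero {V : Type*} [NormedAddCommGroup V]
    [InnerProductSpace ℝ V] (hV : Module.finrank ℝ V = 2) {u n : V} (hu : u ≠ 0)
    (hn : n ≠ 0) (h : ⟪n, u⟫ = 0) (y : V) : ∃ s t : ℝ, s • u + t • n = y := by
  have hli : LinearIndependent ℝ ![u, n] :=
    linearIndependent_of_ne_zero_of_inner_eq_zero (by simp [Fin.forall_fin_two, hu, hn])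
      fun i j hij => by fin_cases i <;> fin_cases j <;> simp_all [real_inner_comm]
  have hspan := hli.span_eq_top_of_card_eq_finrank (by simp [hV])
  rw [Matrix.range_cons_cons_empty] at hspan
  exact Submodule.mem_span_pair.mp (hspan ▸ Submodule.mem_top)

theorem AffineIndependent.interior_convexHull_nonempty {V : Type*} [NormedAddCommGroup V]
    [NormedSpace ℝ V] [FiniteDimensional ℝ V] {ι : Type*} [Fintype ι] {p : ι → V}
    (hp : AffineIndependent ℝ p) (hcard : Fintype.card ι = Module.finrank ℝ V + 1) :
    (interior (convexHull ℝ (Set.range p))).Nonempty :=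
  interior_convexHull_nonempty_iff_affineSpan_eq_top.mpr
    (hp.affineSpan_eq_top_iff_card_eq_finrank_add_one.mpr hcard)

open MvPolynomial in
/-- If a polynomial `p` on the plane equals a constant `a` on an edge `E` of a
nondegenerate triangle `T`, has vanishing normal derivative on `E`, and is
harmonic on `T`, then `p ≡ a` on `T`. -/
theorem phiFEM_poly_propagation
    (A B Cpt : EuclideanSpace ℝ (Fin 2))
    (hABC : AffineIndependent ℝ ![A, B, Cpt])
    (T : Set (EuclideanSpace ℝ (Fin 2)))
    (hT : T = convexHull ℝ {A, B, Cpt})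
    (E : Set (EuclideanSpace ℝ (Fin 2)))
    (hE : E = segment ℝ A B)
    (n : EuclideanSpace ℝ (Fin 2)) (hn : ‖n‖ = 1) (hnE : ⟪n, B - A⟫ = 0)
    (p : EuclideanSpace ℝ (Fin 2) → ℝ)
    (hp : ∃ q : MvPolynomial (Fin 2) ℝ, ∀ x, p x = MvPolynomial.eval (fun i => x i) q)
    (a : ℝ)
    (hval : ∀ x ∈ E, p x = a)
    (hnder : ∀ x ∈ E, fderiv ℝ p x n = 0)
    (hharm : ∀ x ∈ T,
      ∑ i : Fin 2, fderiv ℝ (fun y => fderiv ℝ p y (EuclideanSpace.single i 1)) x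
        (EuclideanSpace.single i 1) = 0) :
    ∀ x ∈ T, p x = a := by
  subst hT hE
  obtain ⟨q, rfl⟩ : ∃ q : MvPolynomial (Fin 2) ℝ, p = fun x => eval (fun i => x i) q :=
    hp.imp fun q hq => funext hq
  have hu : B - A ≠ 0 := sub_ne_zero.mpr (hABC.injective.ne (by decide : (1 : Fin 3) ≠ 0))
  have hrange : Set.range ![A, B, Cpt] = {A, B, Cpt} := by
    rw [Matrix.range_cons, Matrix.range_cons_cons_empty, Set.singleton_union]
  have hΔ : laplacian q = 0 := laplacian_eq_zero_of_sum_fderiv_fderiv_eq_zero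
    (by simpa [hrange] using hABC.interior_convexHull_nonempty (by simp)) hharm
  set r := q - C a
  have hr : dirDeriv (fun i => (B - A) i) (dirDeriv (fun i => (B - A) i) r) +
      ‖B - A‖ ^ 2 • dirDeriv (fun i => n i) (dirDeriv (fun i => n i) r) = 0 := by
    rw [← norm_sq_smul_laplacian_eq _ n hn hnE, laplacian_sub, laplacian_C, hΔ, sub_zero,
      smul_zero]
  have h₀ : restrictToLine (fun i => A i) (fun i => (B - A) i) r = 0 :=
    restrictToLine_eq_zero_of_segment fun x hx => by simp [r, hval x hx]
  have h₁ : restrictToLine (fun i => A i) (fun i => (B - A) i) (dirDeriv (fun i => n i) r) = 0 :=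
    restrictToLine_eq_zero_of_segment fun x hx => by simpa [r, fderiv_eval_apply] using hnder x hx
  intro x _
  obtain ⟨s, t, hx⟩ := exists_smul_add_smul_eq_of_inner_eq_zero finrank_euclideanSpace_fin hu
    (norm_ne_zero_iff.mp (hn ▸ one_ne_zero)) hnE (x - A)
  have hzero := eval_eq_zero_of_cauchy_data (fun i => A i) (by positivity) hr h₀ h₁ s t
  rw [show x = A + (s • (B - A) + t • n) by rw [hx, add_sub_cancel], ← sub_eq_zero]
  simpa [r, Pi.add_def, Pi.smul_def, add_assoc] using hzero
end

section
/- Let q : [0,1] → ℝ and φ : [0,1] → ℝ be polynomials of degrees at most k and l respectively, with φ(t₀) = 0 for some t₀ ∈ [0,1] and ‖φ'‖_{∞,[0,1]} ≠ 0. Then there is a constant C > 0 depending only on k and l (not on q, φ, t₀) such that ‖q·φ‖_{L²(0,1)} ≥ C · ‖q‖_{L²(0,1)} · ‖φ'‖_{∞,[0,1]}. -/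
open Polynomial MeasureTheory intervalIntegral

noncomputable def pol {N : ℕ} (a : Fin N → ℝ) : Polynomial ℝ :=
  ∑ i, Polynomial.C (a i) * Polynomial.X ^ (i : ℕ)

lemma pol_eval {N : ℕ} (a : Fin N → ℝ) (t : ℝ) :
    (pol a).eval t = ∑ i, a i * t ^ (i : ℕ) := by
  simp [pol, Polynomial.eval_finset_sum]

lemma pol_deriv_eval {M : ℕ} (b : Fin M → ℝ) (t : ℝ) :
    (pol b).derivative.eval t = ∑ i : Fin M, b i * ((i : ℕ) * t ^ ((i : ℕ) - 1)) := by
  simp [pol, Polynomial.derivative_sum, Polynomial.derivative_C_mul,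
    Polynomial.derivative_X_pow, Polynomial.eval_finset_sum, mul_assoc]

lemma pol_eval_abs_le {N : ℕ} {a : Fin N → ℝ} (ha : ∀ i, |a i| ≤ 1) {t : ℝ}
    (ht : t ∈ Set.Icc (0:ℝ) 1) : |(pol a).eval t| ≤ (N : ℝ) := by
  rw [pol_eval]
  calc |∑ i : Fin N, a i * t ^ (i:ℕ)| ≤ ∑ i : Fin N, |a i * t ^ (i:ℕ)| :=
        Finset.abs_sum_le_sum_abs _ _
    _ ≤ ∑ _i : Fin N, (1:ℝ) := by
        refine Finset.sum_le_sum fun i _ => ?_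
        rw [abs_mul, abs_pow]
        have h1 : |t| ≤ 1 := abs_le.mpr ⟨by linarith [ht.1], ht.2⟩
        have := pow_le_one₀ (abs_nonneg t) h1 (n := (i:ℕ))
        calc |a i| * |t| ^ (i:ℕ) ≤ 1 * 1 :=
          mul_le_mul (ha i) this (by positivity) (by norm_num)
        _ = 1 := by norm_num
    _ = (N : ℝ) := by simp
lemma sqrt_int_le {N : ℕ} {a : Fin N → ℝ} (ha : ∀ i, |a i| ≤ 1) :
    Real.sqrt (∫ t in (0:ℝ)..1, (pol a).eval t ^ 2) ≤ (N : ℝ) := by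
  have hint : (∫ t in (0:ℝ)..1, (pol a).eval t ^ 2) ≤ (N:ℝ)^2 := by
    have : (∫ t in (0:ℝ)..1, (N:ℝ)^2) = (N:ℝ)^2 := by simp
    rw [← this]
    refine intervalIntegral.integral_mono_on zero_le_one ?_ ?_ ?_
    · exact ((Polynomial.continuous _).pow 2).intervalIntegrable _ _
    · exact intervalIntegrable_const
    · intro t ht
      calc (pol a).eval t ^ 2 = |(pol a).eval t| ^ 2 := (sq_abs _).symm
        _ ≤ (N:ℝ)^2 := pow_le_pow_left₀ (abs_nonneg _) (pol_eval_abs_le ha ht) 2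
  calc Real.sqrt (∫ t in (0:ℝ)..1, (pol a).eval t ^ 2) ≤ Real.sqrt ((N:ℝ)^2) :=
        Real.sqrt_le_sqrt hint
    _ = (N:ℝ) := by rw [Real.sqrt_sq (by positivity)]

lemma deriv_eval_abs_le {M : ℕ} {b : Fin M → ℝ} (hb : ∀ i, |b i| ≤ 1) {t : ℝ}
    (ht : t ∈ Set.Icc (0:ℝ) 1) : |(pol b).derivative.eval t| ≤ (M : ℝ)^2 := by
  rw [pol_deriv_eval]
  have h1 : |t| ≤ 1 := abs_le.mpr ⟨by linarith [ht.1], ht.2⟩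
  calc |∑ i : Fin M, b i * ((i:ℕ) * t ^ ((i:ℕ)-1))|
      ≤ ∑ i : Fin M, |b i * ((i:ℕ) * t ^ ((i:ℕ)-1))| := Finset.abs_sum_le_sum_abs _ _
    _ ≤ ∑ _i : Fin M, (M:ℝ) := by
        refine Finset.sum_le_sum fun i _ => ?_
        rw [abs_mul, abs_mul, abs_pow]
        have h3 : |t| ^ ((i:ℕ)-1) ≤ 1 := pow_le_one₀ (abs_nonneg t) h1
        have h4 : |((i:ℕ):ℝ)| ≤ (M:ℝ) := by
          rw [abs_of_nonneg (by positivity)]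
          exact_mod_cast (i.2.le)
        calc |b i| * (|((i:ℕ):ℝ)| * |t| ^ ((i:ℕ)-1)) ≤ 1 * ((M:ℝ) * 1) := by
              refine mul_le_mul (hb i) ?_ (by positivity) (by norm_num)
              exact mul_le_mul h4 h3 (by positivity) (by positivity)
          _ = (M:ℝ) := by ring
    _ = (M:ℝ)^2 := by simp [sq]
lemma prod_eval {N M : ℕ} (a : Fin N → ℝ) (b : Fin M → ℝ) (t : ℝ) :
    (pol a).eval t * (pol b).eval t
      = ∑ p : Fin N × Fin M, (a p.1 * b p.2) * t ^ ((p.1 : ℕ) + (p.2 : ℕ)) := by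
  rw [pol_eval, pol_eval, Finset.sum_mul_sum, Fintype.sum_prod_type]
  refine Finset.sum_congr rfl fun i _ => Finset.sum_congr rfl fun j _ => ?_
  rw [pow_add]; ring

lemma J_eq {N M : ℕ} (a : Fin N → ℝ) (b : Fin M → ℝ) :
    ∫ t in (0:ℝ)..1, ((pol a).eval t * (pol b).eval t) ^ 2
      = ∑ p : Fin N × Fin M, ∑ q : Fin N × Fin M,
          (a p.1 * b p.2) * (a q.1 * b q.2) /
            (((p.1 : ℕ) + (p.2 : ℕ) + (q.1 : ℕ) + (q.2 : ℕ) + 1 : ℕ) : ℝ) := by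
  have h1 : ∀ t : ℝ, ((pol a).eval t * (pol b).eval t) ^ 2
      = ∑ p : Fin N × Fin M, ∑ q : Fin N × Fin M,
          (a p.1 * b p.2) * (a q.1 * b q.2) * t ^ ((p.1 : ℕ) + (p.2 : ℕ) + (q.1 : ℕ) + (q.2 : ℕ)) := by
    intro t
    rw [sq, prod_eval, Finset.sum_mul_sum]
    refine Finset.sum_congr rfl fun p _ => Finset.sum_congr rfl fun q _ => ?_
    rw [pow_add, pow_add]; ring
  simp only [h1]
  rw [intervalIntegral.integral_finset_sum]
  · refine Finset.sum_congr rfl fun p _ => ?_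
    rw [intervalIntegral.integral_finset_sum]
    · refine Finset.sum_congr rfl fun q _ => ?_
      rw [intervalIntegral.integral_const_mul, integral_pow]
      push_cast
      ring
    · intro q _
      exact ((continuous_const.mul (continuous_pow _)).intervalIntegrable _ _)
  · intro p _
    refine (Continuous.intervalIntegrable ?_ _ _)
    exact continuous_finset_sum _ fun q _ => continuous_const.mul (continuous_pow _)
lemma pol_ne_zero {N : ℕ} {a : Fin N → ℝ} (h : a ≠ 0) : pol a ≠ 0 := by
  intro h0
  apply h
  funext i
  have := congrArg (fun p => Polynomial.coeff p i) h0
  simp only [pol, Polynomial.finset_sum_coeff, Polynomial.coeff_C_mul,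
    Polynomial.coeff_X_pow, Polynomial.coeff_zero] at this
  rw [Finset.sum_eq_single i] at this
  · simpa using this
  · intro j _ hj
    simp only [mul_ite, mul_one, mul_zero, ite_eq_right_iff]
    intro hij
    exact absurd (Fin.val_injective hij.symm) hj
  · simp
lemma pol_of_coeff (q : Polynomial ℝ) (k : ℕ) (h : q.natDegree ≤ k) :
    pol (fun i : Fin (k+1) => q.coeff i) = q := by
  conv_rhs => rw [q.as_sum_range' (k+1) (Nat.lt_succ_of_le h)]
  rw [pol, Fin.sum_univ_eq_sum_range (fun i => Polynomial.C (q.coeff i) * Polynomial.X ^ i)]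
  simp [Polynomial.C_mul_X_pow_eq_monomial]

lemma pol_smul {N : ℕ} (c : ℝ) (a : Fin N → ℝ) :
    pol (c • a) = Polynomial.C c * pol a := by
  simp [pol, Finset.mul_sum, mul_assoc]
lemma J_pos {N M : ℕ} {a : Fin N → ℝ} {b : Fin M → ℝ} (ha : pol a ≠ 0) (hb : pol b ≠ 0) :
    0 < ∫ t in (0:ℝ)..1, ((pol a).eval t * (pol b).eval t) ^ 2 := by
  set f : ℝ → ℝ := fun t => ((pol a).eval t * (pol b).eval t) ^ 2 with hfdef
  have hcont : Continuous f := by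
    apply Continuous.pow
    exact (Polynomial.continuous _).mul (Polynomial.continuous _)
  have hfi : IntervalIntegrable f volume 0 1 := hcont.intervalIntegrable _ _
  have hnn : 0 ≤ᵐ[volume] f := Filter.Eventually.of_forall fun t => sq_nonneg _
  rw [intervalIntegral.integral_pos_iff_support_of_nonneg_ae hnn hfi]
  refine ⟨zero_lt_one, ?_⟩
  have hpq : pol a * pol b ≠ 0 := mul_ne_zero ha hb
  have hroots : Set.Finite {x : ℝ | (pol a * pol b).IsRoot x} :=
    Polynomial.finite_setOf_isRoot hpq
  have hsub : Set.Ioc (0:ℝ) 1 \ {x : ℝ | (pol a * pol b).IsRoot x}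
      ⊆ Function.support f ∩ Set.Ioc 0 1 := by
    rintro t ⟨ht, hroot⟩
    refine ⟨?_, ht⟩
    simp only [Function.mem_support, hfdef]
    intro h0
    apply hroot
    have : (pol a).eval t * (pol b).eval t = 0 := by
      exact pow_eq_zero_iff (n := 2) (by norm_num) |>.mp h0
    simpa [Polynomial.IsRoot, Polynomial.eval_mul] using this
  have hmeas : volume (Set.Ioc (0:ℝ) 1 \ {x : ℝ | (pol a * pol b).IsRoot x}) = 1 := by
    rw [measure_diff_null (hroots.measure_zero _)]
    simp
  calc (0:ENNReal) < 1 := by norm_num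
    _ = volume (Set.Ioc (0:ℝ) 1 \ {x : ℝ | (pol a * pol b).IsRoot x}) := hmeas.symm
    _ ≤ volume (Function.support f ∩ Set.Ioc 0 1) := measure_mono hsub

lemma pol_zero {N : ℕ} : pol (0 : Fin N → ℝ) = 0 := by simp [pol]

set_option maxHeartbeats 1000000 in
/-- Key one-dimensional conditioning estimate: for polynomials `q` of degree ≤ k and
`φ` of degree ≤ l with `φ(t₀) = 0` for some `t₀ ∈ [0,1]` and `‖φ'‖_∞ ≠ 0`,
`‖qφ‖_{L²(0,1)} ≥ C(k,l) ‖q‖_{L²(0,1)} ‖φ'‖_{∞,[0,1]}`. -/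
theorem qphi_lower_bound (k l : ℕ) :
    ∃ C : ℝ, 0 < C ∧ ∀ q φ : Polynomial ℝ,
      q.natDegree ≤ k → φ.natDegree ≤ l →
      (∃ t₀ ∈ Set.Icc (0 : ℝ) 1, φ.eval t₀ = 0) →
      (∃ t ∈ Set.Icc (0 : ℝ) 1, φ.derivative.eval t ≠ 0) →
      C * Real.sqrt (∫ t in (0 : ℝ)..1, q.eval t ^ 2) *
          (⨆ t : Set.Icc (0 : ℝ) 1, |φ.derivative.eval (t : ℝ)|) ≤
        Real.sqrt (∫ t in (0 : ℝ)..1, (q.eval t * φ.eval t) ^ 2) := by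
  classical
  haveI : Nonempty (Set.Icc (0:ℝ) 1) := ⟨⟨0, by norm_num⟩⟩
  set Jf : (Fin (k+1) → ℝ) × (Fin (l+1) → ℝ) → ℝ := fun x =>
    ∑ p : Fin (k+1) × Fin (l+1), ∑ q : Fin (k+1) × Fin (l+1),
      (x.1 p.1 * x.2 p.2) * (x.1 q.1 * x.2 q.2) /
        ((((p.1 : ℕ) + (p.2 : ℕ) + (q.1 : ℕ) + (q.2 : ℕ) + 1 : ℕ)) : ℝ) with hJf
  have hJcont : Continuous Jf := by
    refine continuous_finset_sum _ fun p _ => continuous_finset_sum _ fun q _ => ?_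
    fun_prop
  have hJval : ∀ (a : Fin (k+1) → ℝ) (b : Fin (l+1) → ℝ), Jf (a, b) =
      ∫ t in (0:ℝ)..1, ((pol a).eval t * (pol b).eval t) ^ 2 := fun a b => (J_eq a b).symm
  set K : Set ((Fin (k+1) → ℝ) × (Fin (l+1) → ℝ)) :=
    Metric.sphere 0 1 ×ˢ Metric.sphere 0 1 with hKdef
  have hKc : IsCompact K := (isCompact_sphere 0 1).prod (isCompact_sphere 0 1)
  have hKne : K.Nonempty := by
    refine ⟨((fun _ => 1), (fun _ => 1)), ?_, ?_⟩ <;>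
      simp [mem_sphere_zero_iff_norm, pi_norm_const]
  obtain ⟨x₀, hx₀, hmin⟩ := hKc.exists_isMinOn hKne hJcont.continuousOn
  have hx₀1 : ‖x₀.1‖ = 1 := mem_sphere_zero_iff_norm.mp hx₀.1
  have hx₀2 : ‖x₀.2‖ = 1 := mem_sphere_zero_iff_norm.mp hx₀.2
  have hc : 0 < Jf x₀ := by
    have : Jf x₀ = Jf (x₀.1, x₀.2) := by rw [Prod.mk.eta]
    rw [this, hJval]
    exact J_pos (pol_ne_zero (by simp [← norm_pos_iff, hx₀1]))
      (pol_ne_zero (by simp [← norm_pos_iff, hx₀2]))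
  set c := Jf x₀ with hcdef
  have hsqc : 0 < Real.sqrt c := Real.sqrt_pos.mpr hc
  refine ⟨Real.sqrt c / (((k+1 : ℕ) : ℝ) * ((l+1 : ℕ) : ℝ)^2), by positivity, ?_⟩
  set C := Real.sqrt c / (((k+1 : ℕ) : ℝ) * ((l+1 : ℕ) : ℝ)^2) with hCdef
  have hC : 0 < C := by positivity
  intro q φ hqd hφd _ _
  by_cases hq0 : q = 0
  · subst hq0
    simp only [Polynomial.eval_zero]
    rw [show (∫ t in (0:ℝ)..1, (0:ℝ)^2) = 0 by simp, Real.sqrt_zero, mul_zero, zero_mul]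
    exact Real.sqrt_nonneg _
  by_cases hφ0 : φ = 0
  · subst hφ0
    simp only [Polynomial.derivative_zero, Polynomial.eval_zero, abs_zero, ciSup_const,
      mul_zero]
    exact Real.sqrt_nonneg _
  set a : Fin (k+1) → ℝ := fun i => q.coeff i with hadef
  set b : Fin (l+1) → ℝ := fun i => φ.coeff i with hbdef
  have hpa : pol a = q := pol_of_coeff q k hqd
  have hpb : pol b = φ := pol_of_coeff φ l hφd
  have ha0 : a ≠ 0 := fun h => hq0 (by rw [← hpa, h, pol_zero])
  have hb0 : b ≠ 0 := fun h => hφ0 (by rw [← hpb, h, pol_zero])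
  have hα : (0:ℝ) < ‖a‖ := norm_pos_iff.mpr ha0
  have hβ : (0:ℝ) < ‖b‖ := norm_pos_iff.mpr hb0
  set α := ‖a‖
  set β := ‖b‖
  set a' : Fin (k+1) → ℝ := α⁻¹ • a with ha'def
  set b' : Fin (l+1) → ℝ := β⁻¹ • b with hb'def
  have ha'n : ‖a'‖ = 1 := by
    rw [ha'def, norm_smul, norm_inv, norm_norm]
    exact inv_mul_cancel₀ hα.ne'
  have hb'n : ‖b'‖ = 1 := by
    rw [hb'def, norm_smul, norm_inv, norm_norm]
    exact inv_mul_cancel₀ hβ.ne'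
  have hq_eq : q = Polynomial.C α * pol a' := by
    rw [← pol_smul, ha'def, smul_inv_smul₀ hα.ne', hpa]
  have hφ_eq : φ = Polynomial.C β * pol b' := by
    rw [← pol_smul, hb'def, smul_inv_smul₀ hβ.ne', hpb]
  -- bounds on the unit sphere
  have ha'1 : ∀ i, |a' i| ≤ 1 := fun i => ha'n ▸ norm_le_pi_norm a' i
  have hb'1 : ∀ i, |b' i| ≤ 1 := fun i => hb'n ▸ norm_le_pi_norm b' i
  set s₁ := Real.sqrt (∫ t in (0:ℝ)..1, (pol a').eval t ^ 2) with hs₁def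
  set s₂ := ⨆ t : Set.Icc (0:ℝ) 1, |(pol b').derivative.eval (t:ℝ)| with hs₂def
  have hs₁le : s₁ ≤ ((k+1 : ℕ) : ℝ) := sqrt_int_le ha'1
  have hs₂bdd : ∀ t : Set.Icc (0:ℝ) 1, |(pol b').derivative.eval (t:ℝ)| ≤ ((l+1:ℕ):ℝ)^2 :=
    fun t => deriv_eval_abs_le hb'1 t.2
  have hs₂le : s₂ ≤ ((l+1 : ℕ) : ℝ)^2 := ciSup_le hs₂bdd
  have hbdd : BddAbove (Set.range fun t : Set.Icc (0:ℝ) 1 =>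
      |(pol b').derivative.eval (t:ℝ)|) := ⟨((l+1:ℕ):ℝ)^2, by rintro _ ⟨t, rfl⟩; exact hs₂bdd t⟩
  have hs₂0 : 0 ≤ s₂ :=
    le_trans (abs_nonneg _) (le_ciSup hbdd (⟨0, by norm_num⟩ : Set.Icc (0:ℝ) 1))
  have hs₁0 : 0 ≤ s₁ := Real.sqrt_nonneg _
  -- the three homogeneity identities
  have h₁ : Real.sqrt (∫ t in (0:ℝ)..1, q.eval t ^ 2) = α * s₁ := by
    have he : ∀ t : ℝ, q.eval t ^ 2 = α ^ 2 * (pol a').eval t ^ 2 := by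
      intro t; rw [hq_eq]; simp [mul_pow]
    simp only [he]
    rw [intervalIntegral.integral_const_mul, Real.sqrt_mul (sq_nonneg α),
      Real.sqrt_sq hα.le, hs₁def]
  have h₂ : (⨆ t : Set.Icc (0:ℝ) 1, |φ.derivative.eval (t:ℝ)|) = β * s₂ := by
    have hd : ∀ t : ℝ, |φ.derivative.eval t| = β * |(pol b').derivative.eval t| := by
      intro t
      rw [hφ_eq, Polynomial.derivative_C_mul]
      simp [abs_mul, abs_of_pos hβ]
    simp only [hd]
    rw [hs₂def, Real.mul_iSup_of_nonneg hβ.le]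
  have h₃ : Real.sqrt (∫ t in (0:ℝ)..1, (q.eval t * φ.eval t) ^ 2)
      = (α * β) * Real.sqrt (Jf (a', b')) := by
    have he : ∀ t : ℝ, (q.eval t * φ.eval t) ^ 2
        = (α * β) ^ 2 * ((pol a').eval t * (pol b').eval t) ^ 2 := by
      intro t; rw [hq_eq, hφ_eq]; simp only [Polynomial.eval_mul, Polynomial.eval_C]; ring
    simp only [he]
    rw [intervalIntegral.integral_const_mul, Real.sqrt_mul (sq_nonneg _),
      Real.sqrt_sq (by positivity), hJval]
  have hmem : (a', b') ∈ K := ⟨mem_sphere_zero_iff_norm.mpr ha'n,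
    mem_sphere_zero_iff_norm.mpr hb'n⟩
  have hunit : C * s₁ * s₂ ≤ Real.sqrt (Jf (a', b')) := by
    calc C * s₁ * s₂ ≤ C * ((k+1:ℕ):ℝ) * ((l+1:ℕ):ℝ)^2 := by
          exact mul_le_mul (mul_le_mul_of_nonneg_left hs₁le hC.le) hs₂le hs₂0 (by positivity)
      _ = Real.sqrt c := by rw [hCdef]; field_simp
      _ ≤ Real.sqrt (Jf (a', b')) := Real.sqrt_le_sqrt (hmin hmem)
  rw [h₁, h₂, h₃]
  calc C * (α * s₁) * (β * s₂) = (α * β) * (C * s₁ * s₂) := by ring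
    _ ≤ (α * β) * Real.sqrt (Jf (a', b')) :=
        mul_le_mul_of_nonneg_left hunit (by positivity)
end
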